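/- arXiv:0911.2935 — 6 statements merged into one kernel-verified Lean document; each statement's English description precedes it below -/
import Mathlib

section
/- For any n ≥ m ≥ 2 and any residue r with 0 ≤ r ≤ m−1, the number of permutations π of {1,…,n} with maj(π) ≡ r (mod m) equals n!/m. -/
/-!
Deleting the largest letter `n` from a permutation of `{0, …, n}` leaves a permutation `σ` of
`{0, …, n - 1}`, and the `n + 1` ways of inserting it back raise `maj σ` by `0, 1, …, n`, each
exactly once. Hence, modulo `m`,
`#{π ∈ S_{n+1} | maj π ≡ x} = ∑_{j ≤ n} #{σ ∈ S_n | maj σ ≡ x - j}`.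
For `n + 1 = m` the shifts `x - j` run over all residues, so the right side is `n! = m!/m`; for
larger `n` every term is `n!/m` by induction.
-/

open Finset

/-- The major index of a permutation of `Fin n`: the sum of the (1-based)
positions `i` such that `π i > π (i+1)`. -/
def maj (n : ℕ) (π : Equiv.Perm (Fin n)) : ℕ :=
  ∑ i ∈ Finset.range n, if h : i + 1 < n then
    (if π ⟨i + 1, h⟩ < π ⟨i, Nat.lt_of_succ_lt h⟩ then i + 1 else 0) else 0

namespace Multiset

theorem map_add_range_succ (c k : ℕ) :
    (range (k + 1)).map (c + ·) = c ::ₘ (range k).map (c + 1 + ·) := by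
  simp only [range, map_coe, List.range_succ_eq_map, List.map_cons, List.map_map, cons_coe]
  congr 3
  ext j
  simp only [Function.comp_apply]
  omega

theorem countP_bind_map_add_range (s : Multiset ℕ) (k : ℕ) (p : ℕ → Prop)
    [DecidablePred p] :
    (s.bind fun c => (range k).map (c + ·)).countP p =
      ∑ j ∈ Finset.range k, s.countP (p <| · + j) := by
  induction k with
  | zero => simp
  | succ k ih =>
    simp only [range_succ, map_cons, bind_cons, countP_add, countP_map, ih,
      Finset.sum_range_succ, ← countP_eq_card_filter, add_comm]

end Multiset

namespace List

theorem length_of_mem_permutations'Aux {α : Type*} {t : α} :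
    ∀ {w v : List α}, v ∈ permutations'Aux t w → v.length = w.length + 1
  | [], v, h => by simp_all
  | y :: ys, v, h => by
    simp only [permutations'Aux, mem_cons, mem_map] at h
    rcases h with rfl | ⟨v', hv', rfl⟩
    · rfl
    · simp [length_of_mem_permutations'Aux hv']

variable {α : Type*} [LinearOrder α]

/-- The major index of `w.reverse`. Working with reversed words makes the insertion of a letter
structural recursion: a descent of `w.reverse` is an ascent `b < a` of `w`, at the position
given by the number of letters after `b` in `w`. -/
def revMaj : List α → ℕ
  | b :: a :: u => (if b < a then u.length + 1 else 0) + revMaj (a :: u)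
  | _ => 0

theorem revMaj_eq_sum (w : List α) :
    w.revMaj = ∑ i ∈ Finset.range w.length,
      if h : i + 1 < w.length then (if w[i] < w[i + 1] then w.length - (i + 1) else 0) else 0 := by
  induction w with
  | nil => rfl
  | cons b v ih =>
    simp only [length_cons]
    rw [Finset.sum_range_succ']
    simp only [getElem_cons_succ, Nat.add_lt_add_iff_right, Nat.add_sub_add_right, ← ih]
    cases v with
    | nil => rfl
    | cons a u => simp [revMaj, add_comm]

theorem revMaj_cons_of_not_lt {b a : α} (h : ¬b < a) (u : List α) :
    (b :: a :: u).revMaj = (a :: u).revMaj := by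
  simp [revMaj, h]

theorem map_revMaj_cons_permutations'Aux {M y : α} {w : List α} (hy : y < M)
    (hw : ∀ x ∈ w, x < M) :
    ((permutations'Aux M w).map (revMaj ∘ cons y) : Multiset ℕ) =
      (Multiset.range (w.length + 1)).map ((y :: w).revMaj + 1 + ·) := by
  induction w generalizing y with
  | nil => simp [revMaj, hy]
  | cons z zs ih =>
    set c := (z :: zs).revMaj
    set N := zs.length
    have hzM : z < M := hw z mem_cons_self
    -- every insertion into `zs` keeps `z` in front, so the ascent test `y < z` is the same for all
    have hrest : ((permutations'Aux M zs).map ((revMaj ∘ cons y) ∘ cons z) : Multiset ℕ) =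
        (Multiset.range (N + 1)).map fun j => (if y < z then N + 2 else 0) + (c + 1 + j) := by
      calc _ = (((permutations'Aux M zs).map (revMaj ∘ cons z) : Multiset ℕ)).map
            ((if y < z then N + 2 else 0) + ·) := by
            rw [Multiset.map_coe, map_map]
            congr 1
            refine map_congr_left fun v hv => ?_
            simp [revMaj, length_of_mem_permutations'Aux hv, N]
        _ = _ := by
            rw [ih hzM fun x hx => hw x (mem_cons_of_mem _ hx), Multiset.map_map]
            rfl
    have hfront : (y :: M :: z :: zs).revMaj = N + 2 + c := by
      rw [revMaj, if_pos hy, revMaj_cons_of_not_lt hzM.not_gt]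
      rfl
    have hyz : (y :: z :: zs).revMaj = (if y < z then N + 1 else 0) + c := rfl
    simp only [permutations'Aux, map_cons, map_map, ← Multiset.cons_coe, Function.comp_apply,
      hfront, hrest, hyz, length_cons]
    by_cases h : y < z
    · simp only [h, if_true]
      rw [Multiset.map_add_range_succ _ (N + 1)]
      congr 1
      · omega
      · exact Multiset.map_congr rfl fun j _ => by omega
    · simp only [h, if_false, zero_add]
      rw [Multiset.range_succ (N + 1), Multiset.map_cons]
      congr 1
      omega

theorem map_revMaj_permutations'Aux {M : α} {w : List α} (hw : ∀ x ∈ w, x < M) :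
    ((permutations'Aux M w).map revMaj : Multiset ℕ) =
      (Multiset.range (w.length + 1)).map (w.revMaj + ·) := by
  cases w with
  | nil => simp [revMaj]
  | cons y ys =>
    have hy : y < M := hw y mem_cons_self
    rw [permutations'Aux, map_cons, map_map, ← Multiset.cons_coe,
      map_revMaj_cons_permutations'Aux hy fun x hx => hw x (mem_cons_of_mem _ hx),
      revMaj_cons_of_not_lt hy.not_gt, length_cons, Multiset.map_add_range_succ _ (ys.length + 1)]

end List

theorem ZMod.sum_range_sub_natCast {M : Type*} [AddCommMonoid M] (m : ℕ) [NeZero m]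
    (f : ZMod m → M) (x : ZMod m) : ∑ j ∈ range m, f (x - j) = ∑ y, f y := by
  refine sum_nbij' (fun j => x - j) (fun y => (x - y).val) (by simp)
    (fun y _ => mem_range.2 (ZMod.val_lt _)) (fun j hj => ?_) (fun y _ => by simp)
    (fun _ _ => rfl)
  simp [ZMod.val_natCast, Nat.mod_eq_of_lt (mem_range.1 hj)]

open Equiv
open scoped List

def Equiv.Perm.revWord {n : ℕ} (π : Perm (Fin n)) : List ℕ :=
  List.ofFn fun i => (π i.rev : ℕ)

section

variable {n : ℕ}

theorem maj_eq_revMaj_revWord (π : Perm (Fin n)) : maj n π = π.revWord.revMaj := by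
  rw [List.revMaj_eq_sum, maj]
  simp only [Perm.revWord, List.length_ofFn, List.getElem_ofFn]
  cases n with
  | zero => rfl
  | succ k =>
    rw [sum_range_succ, sum_range_succ, ← sum_range_reflect]
    simp only [lt_irrefl, dite_false, add_zero]
    refine sum_congr rfl fun i hi => ?_
    have hi : i < k := mem_range.1 hi
    simp only [show k - 1 - i + 1 < k + 1 by omega, show i + 1 < k + 1 by omega, ↓reduceDIte,
      Fin.rev, Nat.reduceSubDiff, Fin.val_fin_lt]
    simp only [show k - 1 - i = k - (i + 1) by omega, show k - (i + 1) + 1 = k - i by omega]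

theorem Equiv.Perm.revWord_injective : Function.Injective (revWord (n := n)) := by
  intro π σ h
  ext i
  simpa using congrFun (List.ofFn_injective h) i.rev

theorem Equiv.Perm.revWord_perm_range (π : Perm (Fin n)) : π.revWord ~ List.range n := by
  have : π.revWord = List.ofFn (Fin.val ∘ ⇑(π * Fin.revPerm : Perm (Fin n))) := rfl
  rw [this, ← List.map_coe_finRange_eq_range, ← List.ofFn_eq_map]
  exact (π * Fin.revPerm).ofFn_comp_perm _

theorem map_revWord_univ_eq_permutations' :
    (univ : Finset (Perm (Fin n))).val.map Perm.revWord =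
      (List.permutations' (List.range n).reverse : Multiset (List ℕ)) := by
  refine Multiset.eq_of_le_of_card_le ?_ ?_
  · rw [Multiset.le_iff_subset (Multiset.Nodup.map Perm.revWord_injective univ.nodup)]
    intro l hl
    obtain ⟨π, -, rfl⟩ := Multiset.mem_map.1 hl
    exact Multiset.mem_coe.2 <|
      List.mem_permutations'.2 (π.revWord_perm_range.trans (List.reverse_perm _).symm)
  · simp [← (List.permutations_perm_permutations' _).length_eq, List.length_permutations,
      Fintype.card_perm]

end

theorem map_maj_univ_eq_map_revMaj (n : ℕ) :
    (univ : Finset (Perm (Fin n))).val.map (maj n) =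
      (List.permutations' (List.range n).reverse : Multiset (List ℕ)).map List.revMaj := by
  rw [← map_revWord_univ_eq_permutations', Multiset.map_map]
  exact Multiset.map_congr rfl fun π _ => maj_eq_revMaj_revWord π

theorem map_maj_univ_succ_eq_bind (n : ℕ) :
    (univ : Finset (Perm (Fin (n + 1)))).val.map (maj (n + 1)) =
      (univ.val.map (maj n)).bind fun c => (Multiset.range (n + 1)).map (c + ·) := by
  rw [map_maj_univ_eq_map_revMaj, map_maj_univ_eq_map_revMaj, List.range_succ,
    List.reverse_append, List.reverse_singleton, List.singleton_append, List.permutations',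
    ← Multiset.coe_bind, Multiset.map_bind, Multiset.bind_map]
  refine Multiset.bind_congr fun l hl => ?_
  have hl : l ~ List.range n := (List.mem_permutations'.1 hl).trans (List.reverse_perm _)
  have hlen : l.length = n := by simpa using hl.length_eq
  rw [Multiset.map_coe]
  conv_rhs => rw [← hlen]
  exact List.map_revMaj_permutations'Aux fun x hx => List.mem_range.1 (hl.subset hx)

theorem card_filter_maj_eq_countP (n : ℕ) (p : ℕ → Prop) [DecidablePred p] :
    #{π : Perm (Fin n) | p (maj n π)} = (univ.val.map (maj n)).countP p := by
  rw [Multiset.countP_map]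
  rfl

theorem card_maj_cast_succ_eq_sum (m n : ℕ) (x : ZMod m) :
    #{π : Perm (Fin (n + 1)) | (maj (n + 1) π : ZMod m) = x} =
      ∑ j ∈ range (n + 1), #{σ : Perm (Fin n) | (maj n σ : ZMod m) = x - j} := by
  rw [card_filter_maj_eq_countP (n + 1) (fun c : ℕ => (c : ZMod m) = x),
    map_maj_univ_succ_eq_bind, Multiset.countP_bind_map_add_range]
  refine sum_congr rfl fun j _ => ?_
  rw [card_filter_maj_eq_countP n (fun c : ℕ => (c : ZMod m) = x - j)]
  simp only [Nat.cast_add, eq_sub_iff_add_eq]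

theorem card_maj_cast_mul_eq_factorial (m n : ℕ) [NeZero m] (hmn : m ≤ n) (x : ZMod m) :
    #{π : Perm (Fin n) | (maj n π : ZMod m) = x} * m = n.factorial := by
  induction n, hmn using Nat.le_induction generalizing x with
  | base =>
    obtain ⟨k, rfl⟩ : ∃ k, m = k + 1 := Nat.exists_eq_succ_of_ne_zero (NeZero.ne m)
    rw [card_maj_cast_succ_eq_sum, ZMod.sum_range_sub_natCast (k + 1)
        (fun y => #{σ : Perm (Fin k) | (maj k σ : ZMod (k + 1)) = y}),
      ← card_eq_sum_card_fiberwise (fun _ _ => mem_coe.2 (mem_univ _)), card_univ,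
      Fintype.card_perm, Fintype.card_fin, Nat.factorial_succ, mul_comm]
  | succ n _ ih =>
    rw [card_maj_cast_succ_eq_sum, sum_mul, sum_congr rfl fun j _ => ih _, sum_const, card_range,
      smul_eq_mul, Nat.factorial_succ]

theorem stmt_4_general (m n : ℕ) (hn : m ≤ n) (r : ℕ) (hr : r < m) :
    ((Finset.univ.filter (fun π : Equiv.Perm (Fin n) => maj n π % m = r)).card) * m =
      Nat.factorial n := by
  have : NeZero m := ⟨by omega⟩
  rw [← card_maj_cast_mul_eq_factorial m n hn (r : ZMod m)]
  congr 2
  ext π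
  simp only [Finset.mem_filter, mem_univ, true_and]
  rw [ZMod.natCast_eq_natCast_iff', Nat.mod_eq_of_lt hr]

theorem stmt_4 (m n : ℕ) (hm : 2 ≤ m) (hn : m ≤ n) (r : ℕ) (hr : r < m) :
    ((Finset.univ.filter (fun π : Equiv.Perm (Fin n) => maj n π % m = r)).card) * m =
      Nat.factorial n :=
  stmt_4_general m n hn r hr
end

section
/- For any n ≥ 2m−1 with m ≥ 2 and any residue r with 0 ≤ r ≤ m−1, the sum of coefficients of q^k over k ≡ r (mod m) in the polynomial ∏_{k=1}^n (1 + q + ⋯ + q^{2k−1}) equals (2^n · n!)/m. -/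
open Finset Polynomial

/-- The flag major index generating function over type `Bₙ` permutations:
`∏_{k=1}^n (1 + q + ⋯ + q^{2k-1})`, as a polynomial with natural number coefficients. -/
noncomputable def flagMajGF (n : ℕ) : Polynomial ℕ :=
  ∏ k ∈ Finset.Icc 1 n, ∑ i ∈ Finset.range (2 * k), (Polynomial.X : Polynomial ℕ) ^ i

lemma geomS_eval_one (m : ℕ) : (∑ i ∈ range m, (X : ℕ[X]) ^ i).eval 1 = m := by
  simp

lemma geomS_ne_zero {m : ℕ} (hm : 0 < m) : (∑ i ∈ range m, (X : ℕ[X]) ^ i) ≠ 0 := by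
  intro h
  have := congrArg (Polynomial.eval 1) h
  rw [geomS_eval_one] at this
  simp at this
  omega

lemma geomS_natDegree {m : ℕ} (hm : 0 < m) :
    (∑ i ∈ range m, (X : ℕ[X]) ^ i).natDegree = m - 1 := by
  apply le_antisymm
  · apply Polynomial.natDegree_sum_le_of_forall_le
    intro i hi
    simp only [mem_range] at hi
    calc (X ^ i : ℕ[X]).natDegree ≤ i := Polynomial.natDegree_X_pow_le i
    _ ≤ m - 1 := by omega
  · apply Polynomial.le_natDegree_of_ne_zero
    rw [Polynomial.finset_sum_coeff]
    have : ∀ i ∈ range m, ((X : ℕ[X]) ^ i).coeff (m - 1) = if i = m - 1 then 1 else 0 := by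
      intro i _
      rw [Polynomial.coeff_X_pow]
      simp [eq_comm]
    rw [Finset.sum_congr rfl this, Finset.sum_ite_eq' (range m) (m - 1) (fun _ => (1 : ℕ))]
    simp [Nat.sub_lt hm]

/-- Key lemma: residue-class coefficient sums of `(1 + X + ⋯ + X^{m-1}) * Q`. -/
lemma key_lemma (Q : ℕ[X]) (m r D : ℕ) (hr : r < m)
    (hD : ∀ j ∈ Q.support, j + m ≤ D + 1) :
    ∑ k ∈ (range (D + 1)).filter (fun k => k % m = r),
      ((∑ i ∈ range m, (X : ℕ[X]) ^ i) * Q).coeff k = Q.eval 1 := by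
  have hm : 0 < m := by omega
  have step1 : ∀ k, ((∑ i ∈ range m, (X : ℕ[X]) ^ i) * Q).coeff k
      = ∑ i ∈ range m, (if i ≤ k then Q.coeff (k - i) else 0) := by
    intro k
    rw [Finset.sum_mul, Polynomial.finset_sum_coeff]
    refine Finset.sum_congr rfl fun i _ => ?_
    rw [mul_comm, Polynomial.coeff_mul_X_pow']
  calc ∑ k ∈ (range (D + 1)).filter (fun k => k % m = r),
        ((∑ i ∈ range m, (X : ℕ[X]) ^ i) * Q).coeff k
      = ∑ k ∈ (range (D + 1)).filter (fun k => k % m = r),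
          ∑ i ∈ range m, (if i ≤ k then Q.coeff (k - i) else 0) := by
        exact Finset.sum_congr rfl fun k _ => step1 k
    _ = ∑ i ∈ range m, ∑ k ∈ (range (D + 1)).filter (fun k => k % m = r),
          (if i ≤ k then Q.coeff (k - i) else 0) := Finset.sum_comm
    _ = ∑ i ∈ range m, ∑ j ∈ (range (D + 1)).filter (fun j => (j + i) % m = r ∧ j + i ≤ D),
          Q.coeff j := by
        refine Finset.sum_congr rfl fun i hi => ?_
        rw [← Finset.sum_filter, Finset.filter_filter]
        refine Finset.sum_nbij' (fun k => k - i) (fun j => j + i) ?_ ?_ ?_ ?_ ?_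
        · intro k hk
          simp only [mem_filter, mem_range] at hk ⊢
          obtain ⟨hk1, hk2, hk3⟩ := hk
          refine ⟨by omega, ?_, by omega⟩
          rw [Nat.sub_add_cancel hk3]
          · omega
        · intro j hj
          simp only [mem_filter, mem_range] at hj ⊢
          omega
        · intro k hk
          simp only [mem_filter, mem_range] at hk
          omega
        · intro j _
          omega
        · intro k _
          rfl
    _ = ∑ j ∈ range (D + 1), ∑ i ∈ range m,
          (if (j + i) % m = r ∧ j + i ≤ D then Q.coeff j else 0) := by
        rw [Finset.sum_comm]
        exact Finset.sum_congr rfl fun i _ => Finset.sum_filter _ _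
    _ = ∑ j ∈ range (D + 1), Q.coeff j := by
        refine Finset.sum_congr rfl fun j hj => ?_
        rcases eq_or_ne (Q.coeff j) 0 with h0 | h0
        · simp [h0]
        · have hjsup : j ∈ Q.support := Polynomial.mem_support_iff.2 h0
          have hjD : j + m ≤ D + 1 := hD j hjsup
          set i₀ := (r + m - j % m) % m with hi₀
          have hi₀lt : i₀ < m := Nat.mod_lt _ hm
          have hjm : j % m < m := Nat.mod_lt _ hm
          have hmod : (j + i₀) % m = r := by
            have hme : j + i₀ ≡ r + m [MOD m] := by
              calc j + i₀ ≡ j % m + (r + m - j % m) [MOD m] :=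
                    Nat.ModEq.add (Nat.mod_modEq j m).symm (Nat.mod_modEq _ m)
                _ = r + m := by omega
            have : (j + i₀) % m = (r + m) % m := hme
            rw [this, Nat.add_mod_right, Nat.mod_eq_of_lt hr]
          rw [Finset.sum_eq_single_of_mem i₀ (mem_range.2 hi₀lt)]
          · rw [if_pos ⟨hmod, by omega⟩]
          · intro i hi hne
            rw [if_neg]
            rintro ⟨hir, -⟩
            apply hne
            have h1 : j + i ≡ j + i₀ [MOD m] := by
              have : (j + i) % m = (j + i₀) % m := by rw [hir, hmod]
              exact this
            have h2 : i ≡ i₀ [MOD m] := h1.add_left_cancel' j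
            have : i % m = i₀ % m := h2
            rwa [Nat.mod_eq_of_lt (mem_range.1 hi), Nat.mod_eq_of_lt hi₀lt] at this
    _ = Q.eval 1 := by
        rcases eq_or_ne Q 0 with rfl | hQ
        · simp
        · have hdeg : Q.natDegree ≤ D := by
            have := hD Q.natDegree (Polynomial.natDegree_mem_support_of_nonzero hQ)
            omega
          rw [Polynomial.eval_eq_sum_range]
          simp only [one_pow, mul_one]
          exact (Finset.sum_subset (Finset.range_subset_range.2 (by omega))
            (fun k _ hk => Polynomial.coeff_eq_zero_of_natDegree_lt
              (by simp only [mem_range, not_lt] at hk; omega))).symm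

theorem stmt_6 (m n : ℕ) (hm : 2 ≤ m) (hn : 2 * m - 1 ≤ n) (r : ℕ) (hr : r < m) :
    (∑ k ∈ (Finset.range ((flagMajGF n).natDegree + 1)).filter (fun k => k % m = r),
        (flagMajGF n).coeff k) * m = 2 ^ n * Nat.factorial n := by
  have hm0 : 0 < m := by omega
  have hmn : m ∈ Finset.Icc 1 n := by
    rw [mem_Icc]
    omega
  set S : ℕ[X] := ∑ i ∈ range m, (X : ℕ[X]) ^ i with hS
  set Q : ℕ[X] := (1 + X ^ m) * ∏ k ∈ (Icc 1 n).erase m, ∑ i ∈ range (2 * k), (X : ℕ[X]) ^ i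
    with hQ
  have hfac : (∑ i ∈ range (2 * m), (X : ℕ[X]) ^ i) = S * (1 + X ^ m) := by
    rw [two_mul, Finset.sum_range_add, mul_add, mul_one, hS]
    congr 1
    rw [Finset.sum_mul]
    exact Finset.sum_congr rfl fun i _ => by rw [← pow_add, add_comm]
  have hP : flagMajGF n = S * Q := by
    unfold flagMajGF
    rw [← Finset.mul_prod_erase (Icc 1 n) _ hmn, hfac, mul_assoc, hQ]
  have heval : (flagMajGF n).eval 1 = 2 ^ n * Nat.factorial n := by
    unfold flagMajGF
    rw [Polynomial.eval_prod]
    have h1 : ∀ k ∈ Icc 1 n, (∑ i ∈ range (2 * k), (X : ℕ[X]) ^ i).eval 1 = 2 * k := by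
      intro k _
      simp
    rw [Finset.prod_congr rfl h1, Finset.prod_mul_distrib, Finset.prod_const]
    have hcard : (Icc 1 n).card = n := by
      rw [Nat.card_Icc]
      omega
    have hfact : ∏ k ∈ Icc 1 n, k = Nat.factorial n := by
      have : Icc 1 n = Ico 1 (n + 1) := by
        ext x
        simp [Nat.lt_succ_iff]
      rw [this]
      exact Finset.prod_Ico_id_eq_factorial n
    rw [hcard, hfact]
  have hPne : flagMajGF n ≠ 0 := by
    intro h
    rw [h] at heval
    simp [Nat.factorial_ne_zero] at heval
  have hQne : Q ≠ 0 := by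
    intro h
    rw [hP, h, mul_zero] at hPne
    exact hPne rfl
  have hSne : S ≠ 0 := geomS_ne_zero hm0
  have hdeg : (flagMajGF n).natDegree = (m - 1) + Q.natDegree := by
    rw [hP, Polynomial.natDegree_mul hSne hQne, geomS_natDegree hm0]
  have hD : ∀ j ∈ Q.support, j + m ≤ (flagMajGF n).natDegree + 1 := by
    intro j hj
    have := Polynomial.le_natDegree_of_mem_supp j hj
    omega
  have hkey := key_lemma Q m r ((flagMajGF n).natDegree) hr hD
  rw [← hP] at hkey
  rw [hkey]
  have hSe : S.eval 1 = m := geomS_eval_one m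
  calc Q.eval 1 * m = S.eval 1 * Q.eval 1 := by rw [hSe]; ring
    _ = (S * Q).eval 1 := (Polynomial.eval_mul).symm
    _ = (flagMajGF n).eval 1 := by rw [hP]
    _ = 2 ^ n * Nat.factorial n := heval
end

section
/- Let m ≥ 2, ω = e^{2πi/m}, 1 ≤ j ≤ m−1, and let d_n(q) = ∑_{k=0}^{n} (−1)^k q^{\binom{k}{2}} ∏_{t=k+1}^{n} [t]_q. Then for all n, |d_n(ω^j)| ≤ (m−1)(2/c)^{(m−2)/2}, where c = min{1 − cos(2πj'/m) : 1 ≤ j' ≤ m−1}. -/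
/-!
Gessel's sum satisfies the recurrence `d_{n+1}(q) = [n+1]_q d_n(q) + (-1)^{n+1} q^{C(n+1,2)}`.
If `q ≠ 1` and `q^a = 1`, then `[a]_q = 0` and `[a+1]_q = 1`, so `d_a(q) = ± q^{C(a,2)}` and
`d_{a+1}(q) = 0`. For `|q| = 1` the recurrence then gives
`|d_{a+1+s}(q)| ≤ 1 + X + ⋯ + X^{s-1}`, where `X` bounds every `|[t]_q|`. At `q = ω^j` one may
take `X = 2/|q - 1| ≤ √(2/c)`, since `|q - 1|² = 2(1 - cos(2πj/m)) ≥ 2c`, and choosing `a` to be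
the largest multiple of `m` not exceeding `n` gives `s ≤ m - 2`.
-/

open Complex Finset Real

/-- Gessel's formula for the major index generating function over derangements,
evaluated at `q : ℂ`. -/
noncomputable def dGF (n : ℕ) (q : ℂ) : ℂ :=
  ∑ k ∈ Finset.range (n + 1), (-1) ^ k * q ^ (Nat.choose k 2) *
    ∏ t ∈ Finset.Icc (k + 1) n, (∑ i ∈ Finset.range t, q ^ i)

theorem dGF_succ (n : ℕ) (q : ℂ) :
    dGF (n + 1) q =
      (∑ i ∈ range (n + 1), q ^ i) * dGF n q + (-1) ^ (n + 1) * q ^ (n + 1).choose 2 := by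
  rw [dGF, sum_range_succ, dGF, mul_sum, Icc_eq_empty_of_lt (Nat.lt_succ_self _), prod_empty,
    mul_one]
  congr 1
  refine sum_congr rfl fun k hk => ?_
  rw [prod_Icc_succ_top (by rw [mem_range] at hk; omega)]
  ring

theorem dGF_of_pow_eq_one {q : ℂ} (hq : q ≠ 1) {a : ℕ} (ha : q ^ a = 1) :
    dGF a q = (-1) ^ a * q ^ a.choose 2 := by
  cases a with
  | zero => simp [dGF]
  | succ a => rw [dGF_succ, geom_sum_eq hq, ha, sub_self, zero_div, zero_mul, zero_add]

theorem dGF_succ_of_pow_eq_one {q : ℂ} (hq : q ≠ 1) {a : ℕ} (ha : q ^ a = 1) :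
    dGF (a + 1) q = 0 := by
  have hgeom : ∑ i ∈ range (a + 1), q ^ i = 1 := by
    rw [sum_range_succ, geom_sum_eq hq, ha, sub_self, zero_div, zero_add]
  have hchoose : (a + 1).choose 2 = a + a.choose 2 := by
    rw [Nat.choose_succ_succ', Nat.choose_one_right]
  rw [dGF_succ, dGF_of_pow_eq_one hq ha, hgeom, hchoose, pow_add q, ha]
  ring

theorem norm_dGF_succ_le {q : ℂ} (hq : ‖q‖ = 1) {X : ℝ}
    (hX : ∀ t, ‖∑ i ∈ range t, q ^ i‖ ≤ X) (n : ℕ) :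
    ‖dGF (n + 1) q‖ ≤ X * ‖dGF n q‖ + 1 := by
  rw [dGF_succ]
  refine (norm_add_le _ _).trans ?_
  rw [norm_mul, norm_mul, norm_pow, norm_pow, norm_neg, norm_one, hq, one_pow, one_pow, mul_one]
  gcongr
  exact hX _

theorem norm_dGF_add_one_add_le {q : ℂ} (hq : q ≠ 1) (hq_norm : ‖q‖ = 1) {a : ℕ} (ha : q ^ a = 1)
    {X : ℝ} (hX : ∀ t, ‖∑ i ∈ range t, q ^ i‖ ≤ X) (s : ℕ) :
    ‖dGF (a + 1 + s) q‖ ≤ ∑ i ∈ range s, X ^ i := by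
  induction s with
  | zero => simp [dGF_succ_of_pow_eq_one hq ha]
  | succ s ih =>
    calc ‖dGF (a + 1 + s + 1) q‖ ≤ X * ‖dGF (a + 1 + s) q‖ + 1 := norm_dGF_succ_le hq_norm hX _
      _ ≤ X * ∑ i ∈ range s, X ^ i + 1 := by
        have : 0 ≤ X := (norm_nonneg _).trans (hX 0)
        gcongr
      _ = ∑ i ∈ range (s + 1), X ^ i := (geom_sum_succ ..).symm

theorem norm_dGF_le {q : ℂ} (hq : q ≠ 1) {m : ℕ} (hm : 0 < m) (hqm : q ^ m = 1) {X : ℝ}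
    (hX : ∀ t, ‖∑ i ∈ range t, q ^ i‖ ≤ X) (n : ℕ) :
    ‖dGF n q‖ ≤ (m - 1) * X ^ (m - 2) := by
  have hX1 : 1 ≤ X := by simpa using hX 1
  have hm2 : 2 ≤ m := by
    by_contra h
    exact hq (by simpa [show m = 1 by omega] using hqm)
  have hqa : q ^ (m * (n / m)) = 1 := by rw [pow_mul, hqm, one_pow]
  have hn := Nat.div_add_mod n m
  have hr := Nat.mod_lt n hm
  have hm1 : (1 : ℝ) ≤ m - 1 := by
    rw [le_sub_iff_add_le]; exact_mod_cast hm2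
  rcases Nat.eq_zero_or_pos (n % m) with hr0 | hr0
  · rw [← hn, hr0, add_zero, dGF_of_pow_eq_one hq hqa, norm_mul, norm_pow, norm_pow, norm_neg,
      norm_one, norm_eq_one_of_pow_eq_one hqm hm.ne', one_pow, one_pow, one_mul]
    exact one_le_mul_of_one_le_of_one_le hm1 (one_le_pow₀ hX1)
  · obtain ⟨s, hs⟩ : ∃ s, n = m * (n / m) + 1 + s := ⟨n % m - 1, by omega⟩
    calc ‖dGF n q‖ ≤ ∑ i ∈ range s, X ^ i :=
          hs ▸ norm_dGF_add_one_add_le hq (norm_eq_one_of_pow_eq_one hqm hm.ne') hqa hX s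
      _ ≤ ∑ i ∈ range s, X ^ (m - 2) :=
          sum_le_sum fun i hi => pow_le_pow_right₀ hX1 (by rw [mem_range] at hi; omega)
      _ ≤ (m - 1) * X ^ (m - 2) := by
        rw [sum_const, card_range, nsmul_eq_mul]
        gcongr
        rw [le_sub_iff_add_le]
        exact_mod_cast (by omega : s + 1 ≤ m)

theorem norm_geom_sum_le_sqrt {q : ℂ} (hq : ‖q‖ = 1) {c : ℝ} (hc : 0 < c)
    (hqc : 2 * c ≤ ‖q - 1‖ ^ 2) (t : ℕ) : ‖∑ i ∈ range t, q ^ i‖ ≤ √(2 / c) := by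
  have hq1 : 0 < ‖q - 1‖ := by
    by_contra h
    nlinarith [norm_nonneg (q - 1)]
  rw [geom_sum_eq (sub_ne_zero.mp (norm_pos_iff.mp hq1)), norm_div]
  calc ‖q ^ t - 1‖ / ‖q - 1‖ ≤ 2 / ‖q - 1‖ := by
        gcongr
        calc ‖q ^ t - 1‖ ≤ ‖q ^ t‖ + ‖(1 : ℂ)‖ := norm_sub_le _ _
          _ = 2 := by rw [norm_pow, hq, one_pow, norm_one]; norm_num
    _ ≤ √(2 / c) := by
        rw [le_sqrt (by positivity) (by positivity), div_pow]
        calc (2 : ℝ) ^ 2 / ‖q - 1‖ ^ 2 ≤ 2 ^ 2 / (2 * c) := by gcongr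
          _ = 2 / c := by field_simp

theorem norm_exp_pow_sub_one_sq (m j : ℕ) :
    ‖exp (2 * π * I / m) ^ j - 1‖ ^ 2 = 2 * (1 - Real.cos (2 * π * j / m)) := by
  set θ : ℝ := 2 * π * j / m
  have : exp (2 * π * I / m) ^ j = exp (I * θ) := by
    rw [← Complex.exp_nat_mul]; push_cast [θ]; ring_nf
  rw [this, norm_exp_I_mul_ofReal_sub_one, norm_mul, mul_pow, Real.norm_eq_abs, sq_abs,
    Real.norm_eq_abs, sq_abs, Real.sin_sq_eq_half_sub, show 2 * (θ / 2) = θ by ring]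
  ring

theorem stmt_8 (m : ℕ) (hm : 2 ≤ m)
    (ω : ℂ) (hω : ω = Complex.exp (2 * Real.pi * Complex.I / m))
    (j : ℕ) (hj1 : 1 ≤ j) (hj2 : j ≤ m - 1)
    (hne : (Finset.Icc 1 (m - 1)).Nonempty)
    (c : ℝ)
    (hc : c = (Finset.Icc 1 (m - 1)).inf' hne
      (fun j' => 1 - Real.cos (2 * Real.pi * j' / m))) :
    ∀ n : ℕ, ‖dGF n (ω ^ j)‖ ≤ (m - 1 : ℝ) * (2 / c) ^ (((m : ℝ) - 2) / 2) := by
  intro n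
  have hω_prim : IsPrimitiveRoot ω m := hω ▸ isPrimitiveRoot_exp m (by omega)
  have hω_dist (j' : ℕ) : ‖ω ^ j' - 1‖ ^ 2 = 2 * (1 - Real.cos (2 * π * j' / m)) :=
    hω ▸ norm_exp_pow_sub_one_sq m j'
  have hc_pos : 0 < c := by
    rw [hc, lt_inf'_iff]
    intro j' hj'
    rw [mem_Icc] at hj'
    have := sq_pos_of_pos (norm_pos_iff.mpr (sub_ne_zero.mpr
      (hω_prim.pow_ne_one_of_pos_of_lt (by omega) (by omega : j' < m))))
    linarith [hω_dist j']
  have hqc : 2 * c ≤ ‖ω ^ j - 1‖ ^ 2 := by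
    rw [hω_dist, hc]
    gcongr
    exact inf'_le _ (mem_Icc.mpr ⟨hj1, hj2⟩)
  have hq_norm : ‖ω ^ j‖ = 1 := by rw [norm_pow, hω_prim.norm'_eq_one (by omega), one_pow]
  calc ‖dGF n (ω ^ j)‖ ≤ (m - 1) * √(2 / c) ^ (m - 2) :=
        norm_dGF_le (hω_prim.pow_ne_one_of_pos_of_lt (by omega) (by omega)) (by omega)
          (by rw [← pow_mul, mul_comm, pow_mul, hω_prim.pow_eq_one, one_pow])
          (norm_geom_sum_le_sqrt hq_norm hc_pos hqc) n
    _ = (m - 1) * (2 / c) ^ (((m : ℝ) - 2) / 2) := by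
        rw [sqrt_eq_rpow, ← rpow_natCast, ← rpow_mul (by positivity), Nat.cast_sub hm]
        ring_nf
end

section
/- For m ≥ 2, ω = e^{2πi/m}, and 1 ≤ j ≤ m−1, the sequence d_n(ω^j)/|D_n| tends to 0 as n → ∞, where d_n(q) = ∑_{k=0}^n (−1)^k q^{\binom{k}{2}} ∏_{t=k+1}^n [t]_q and |D_n| is the number of derangements of {1,…,n}. -/
open Complex Finset Filter Topology

/-- The finset of derangements of `{1, …, n}`. -/
def derangementsFinset (n : ℕ) : Finset (Equiv.Perm (Fin n)) :=
  Finset.univ.filter (fun π => ∀ i, π i ≠ i)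

lemma derangementsFinset_card (n : ℕ) :
    (derangementsFinset n).card = numDerangements n := by
  rw [← card_derangements_fin_eq_numDerangements, derangementsFinset,
    ← Fintype.card_subtype]
  exact Fintype.card_congr (Equiv.refl _)

lemma numDerangements_consec (n : ℕ) :
    1 ≤ numDerangements n + numDerangements (n + 1) := by
  induction n with
  | zero => simp [numDerangements]
  | succ k ih =>
    have h2 : numDerangements (k + 2) = (k + 1) *
        (numDerangements k + numDerangements (k + 1)) := numDerangements_add_two k
    have : 1 * 1 ≤ (k + 1) * (numDerangements k + numDerangements (k + 1)) :=
      Nat.mul_le_mul (by omega) ih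
    have h4 : numDerangements (k + 1 + 1) = numDerangements (k + 2) := rfl
    omega

lemma numDerangements_tendsto : Filter.Tendsto numDerangements atTop atTop := by
  rw [tendsto_atTop]
  intro b
  filter_upwards [eventually_ge_atTop (b + 2)] with n hn
  obtain ⟨k, rfl⟩ : ∃ k, n = k + 2 := ⟨n - 2, by omega⟩
  have h2 : numDerangements (k + 2) = (k + 1) *
      (numDerangements k + numDerangements (k + 1)) := numDerangements_add_two k
  have h3 : (k + 1) * 1 ≤ (k + 1) * (numDerangements k + numDerangements (k + 1)) :=
    Nat.mul_le_mul le_rfl (numDerangements_consec k)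
  omega

theorem stmt_11 (m : ℕ) (hm : 2 ≤ m)
    (ω : ℂ) (hω : ω = Complex.exp (2 * Real.pi * Complex.I / m))
    (j : ℕ) (hj1 : 1 ≤ j) (hj2 : j ≤ m - 1) :
    Tendsto (fun n => dGF n (ω ^ j) / ((derangementsFinset n).card : ℂ))
      atTop (𝓝 0) := by
  set q : ℂ := ω ^ j with hqdef
  have hm0 : m ≠ 0 := by omega
  have hprim : IsPrimitiveRoot ω m := hω ▸ Complex.isPrimitiveRoot_exp m hm0
  -- q ≠ 1
  have hq1 : q ≠ 1 := by
    intro h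
    have hdvd : m ∣ j := (hprim.pow_eq_one_iff_dvd j).mp h
    have := Nat.le_of_dvd (by omega) hdvd
    omega
  -- q ^ m = 1
  have hqm : q ^ m = 1 := by
    rw [hqdef, ← pow_mul, mul_comm, pow_mul, hprim.pow_eq_one, one_pow]
  -- ‖q‖ = 1
  have hωabs : ‖ω‖ = 1 := by
    rw [hω]
    have h : 2 * (Real.pi : ℂ) * Complex.I / m
        = ((2 * Real.pi / m : ℝ) : ℂ) * Complex.I := by
      push_cast; ring
    rw [h]
    exact Complex.norm_exp_ofReal_mul_I _
  have habs : ‖q‖ = 1 := by rw [hqdef, norm_pow, hωabs, one_pow]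
  have hqne : q - 1 ≠ 0 := sub_ne_zero.mpr hq1
  have hqpos : 0 < ‖q - 1‖ := norm_pos_iff.mpr hqne
  set B : ℝ := max (2 / ‖q - 1‖) 1 with hBdef
  have hB1 : (1 : ℝ) ≤ B := le_max_right _ _
  have hB0 : (0 : ℝ) ≤ B := by linarith
  -- each geometric factor bounded by B
  have hfac : ∀ t : ℕ, ‖∑ i ∈ Finset.range t, q ^ i‖ ≤ B := by
    intro t
    rw [geom_sum_eq hq1, norm_div]
    refine le_trans ?_ (le_max_left _ _)
    gcongr
    calc ‖q ^ t - 1‖ ≤ ‖q ^ t‖ + ‖(1 : ℂ)‖ := norm_sub_le _ _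
      _ = 2 := by rw [norm_pow, habs, one_pow, norm_one]; norm_num
  -- vanishing of products containing a multiple of m
  have hvanish : ∀ k n : ℕ, k + m ≤ n →
      ∏ t ∈ Finset.Icc (k + 1) n, (∑ i ∈ Finset.range t, q ^ i) = 0 := by
    intro k n hkn
    have hdm : m * (k / m) + k % m = k := Nat.div_add_mod k m
    have hmod : k % m < m := Nat.mod_lt _ (by omega)
    have hmul : m * (k / m + 1) = m * (k / m) + m := by ring
    have hmem : m * (k / m + 1) ∈ Finset.Icc (k + 1) n := by
      rw [Finset.mem_Icc]
      omega
    refine Finset.prod_eq_zero hmem ?_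
    rw [geom_sum_eq hq1, pow_mul, hqm, one_pow, sub_self, zero_div]
  set C : ℝ := m * B ^ m with hCdef
  have hC0 : 0 ≤ C := by positivity
  -- uniform bound on dGF for n ≥ m
  have hbound : ∀ n : ℕ, m ≤ n → ‖dGF n q‖ ≤ C := by
    intro n hn
    have hsub : dGF n q = ∑ k ∈ Finset.Icc (n + 1 - m) n,
        ((-1) ^ k * q ^ (Nat.choose k 2) *
          ∏ t ∈ Finset.Icc (k + 1) n, (∑ i ∈ Finset.range t, q ^ i)) := by
      rw [dGF]
      symm
      apply Finset.sum_subset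
      · intro k hk
        rw [Finset.mem_Icc] at hk
        rw [Finset.mem_range]
        omega
      · intro k hk hk2
        rw [Finset.mem_range] at hk
        rw [Finset.mem_Icc] at hk2
        have hle : k + m ≤ n := by omega
        rw [hvanish k n hle, mul_zero]
    rw [hsub]
    have hterm : ∀ k ∈ Finset.Icc (n + 1 - m) n,
        ‖(-1 : ℂ) ^ k * q ^ (Nat.choose k 2) *
          ∏ t ∈ Finset.Icc (k + 1) n, (∑ i ∈ Finset.range t, q ^ i)‖ ≤ B ^ m := by
      intro k hk
      rw [Finset.mem_Icc] at hk
      rw [norm_mul, norm_mul, norm_pow, norm_pow, norm_neg, norm_one, one_pow,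
        habs, one_pow, one_mul, one_mul, norm_prod]
      calc ∏ t ∈ Finset.Icc (k + 1) n, ‖∑ i ∈ Finset.range t, q ^ i‖
          ≤ ∏ _t ∈ Finset.Icc (k + 1) n, B :=
            Finset.prod_le_prod (fun t _ => norm_nonneg _) (fun t _ => hfac t)
        _ = B ^ (Finset.Icc (k + 1) n).card := Finset.prod_const B
        _ ≤ B ^ m := by
            apply pow_le_pow_right₀ hB1
            rw [Nat.card_Icc]
            omega
    calc ‖∑ k ∈ Finset.Icc (n + 1 - m) n, ((-1 : ℂ) ^ k * q ^ (Nat.choose k 2) *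
            ∏ t ∈ Finset.Icc (k + 1) n, (∑ i ∈ Finset.range t, q ^ i))‖
        ≤ ∑ k ∈ Finset.Icc (n + 1 - m) n, ‖(-1 : ℂ) ^ k * q ^ (Nat.choose k 2) *
            ∏ t ∈ Finset.Icc (k + 1) n, (∑ i ∈ Finset.range t, q ^ i)‖ :=
          norm_sum_le _ _
      _ ≤ (Finset.Icc (n + 1 - m) n).card • (B ^ m) :=
          Finset.sum_le_card_nsmul _ _ _ hterm
      _ = C := by
          rw [Nat.card_Icc, nsmul_eq_mul, hCdef]
          congr 1
          have : n + 1 - (n + 1 - m) = m := by omega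
          rw [this]
    -- done
  -- derangement count tends to infinity
  have hD : Tendsto (fun n => ((derangementsFinset n).card : ℝ)) atTop atTop := by
    have heq : (fun n => ((derangementsFinset n).card : ℝ))
        = fun n => ((numDerangements n : ℕ) : ℝ) := by
      funext n; rw [derangementsFinset_card]
    rw [heq]
    exact tendsto_natCast_atTop_atTop.comp numDerangements_tendsto
  have hg : Tendsto (fun n => C / ((derangementsFinset n).card : ℝ)) atTop (𝓝 0) :=
    Tendsto.div_atTop tendsto_const_nhds hD
  refine squeeze_zero_norm' ?_ hg
  · filter_upwards [eventually_ge_atTop m] with n hn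
    rw [norm_div, Complex.norm_natCast]
    rcases Nat.eq_zero_or_pos (derangementsFinset n).card with h | h
    · simp [h]
    · gcongr
      exact hbound n hn
end

section
/- For m ≥ 2, ω = e^{2πi/m}, and 1 ≤ j ≤ m−1, the polynomial d^B_n(q) = ∑_{k=0}^n (−1)^k q^{k(k−1)} [2n]_q [2n−2]_q ⋯ [2k+2]_q evaluated at q = ω^j is bounded in absolute value by a constant depending only on m (independent of n). -/
open Complex Finset

/-!
At an `m`-th root of unity `q ≠ 1` the `q`-integer `[2t]_q` vanishes as soon as `m ∣ t`, so the
`k`-th summand of `dBGF n q` is zero unless `n - k < m`: only the last `m` summands survive. Each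
of them has fewer than `m` factors `[2t]_q`, and `|[N]_q| = |q^N - 1| / |q - 1| ≤ 2 / |q - 1|`,
which gives a bound independent of `n`. Finitely many `j` then give a uniform constant.
-/

/-- The Adin–Roichman formula for the flag major index generating function over
type `B` derangements, evaluated at `q : ℂ`:
`∑_{k=0}^n (−1)^k q^{k(k−1)} [2n]_q [2n−2]_q ⋯ [2k+2]_q`. -/
noncomputable def dBGF (n : ℕ) (q : ℂ) : ℂ :=
  ∑ k ∈ Finset.range (n + 1), (-1) ^ k * q ^ (k * (k - 1)) *
    ∏ t ∈ Finset.Icc (k + 1) n, (∑ i ∈ Finset.range (2 * t), q ^ i)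

theorem norm_geom_sum_le_of_norm_le_one {K : Type*} [NormedDivisionRing K] {q : K}
    (hq : ‖q‖ ≤ 1) (hq1 : q ≠ 1) (N : ℕ) :
    ‖∑ i ∈ range N, q ^ i‖ ≤ 2 / ‖q - 1‖ := by
  rw [geom_sum_eq hq1, norm_div]
  gcongr
  calc ‖q ^ N - 1‖ ≤ ‖q ^ N‖ + ‖(1 : K)‖ := norm_sub_le _ _
    _ ≤ 1 + 1 := by rw [norm_pow, norm_one]; gcongr; exact pow_le_one₀ (norm_nonneg q) hq
    _ = 2 := one_add_one_eq_two

theorem norm_prod_geom_sum_le_of_norm_le_one {K ι : Type*} [NormedField K] {q : K}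
    (hq : ‖q‖ ≤ 1) (hq1 : q ≠ 1) (s : Finset ι) (N : ι → ℕ) :
    ‖∏ t ∈ s, ∑ i ∈ range (N t), q ^ i‖ ≤ (2 / ‖q - 1‖) ^ #s := by
  rw [norm_prod, ← prod_const]
  exact prod_le_prod (fun _ _ ↦ norm_nonneg _)
    fun t _ ↦ norm_geom_sum_le_of_norm_le_one hq hq1 (N t)

theorem one_le_two_div_norm_sub_one {K : Type*} [NormedDivisionRing K] {q : K}
    (hq : ‖q‖ ≤ 1) (hq1 : q ≠ 1) : 1 ≤ 2 / ‖q - 1‖ := by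
  rw [one_le_div (norm_pos_iff.mpr (sub_ne_zero.mpr hq1))]
  calc ‖q - 1‖ ≤ ‖q‖ + ‖(1 : K)‖ := norm_sub_le _ _
    _ ≤ 2 := by rw [norm_one]; linarith

theorem geom_sum_eq_zero_of_pow_eq_one {K : Type*} [DivisionRing K] {q : K} {N : ℕ}
    (hq1 : q ≠ 1) (hqN : q ^ N = 1) : ∑ i ∈ range N, q ^ i = 0 := by
  rw [geom_sum_eq hq1, hqN, sub_self, zero_div]

theorem Nat.exists_dvd_mem_Icc {m k n : ℕ} (hm : 0 < m) (h : k + m ≤ n) :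
    ∃ t ∈ Icc (k + 1) n, m ∣ t := by
  refine ⟨m * (k / m + 1), mem_Icc.mpr ⟨Nat.lt_mul_div_succ k hm, ?_⟩, dvd_mul_right m _⟩
  have := Nat.div_mul_le_self k m
  calc m * (k / m + 1) = k / m * m + m := by ring
    _ ≤ n := by omega

section RootOfUnity

variable {m : ℕ} {q : ℂ}

theorem prod_Icc_geom_sum_eq_zero (hm : 0 < m) (hq1 : q ≠ 1) (hqm : q ^ m = 1)
    {k n : ℕ} (h : k + m ≤ n) :
    ∏ t ∈ Icc (k + 1) n, ∑ i ∈ range (2 * t), q ^ i = 0 := by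
  obtain ⟨t, ht, ⟨c, rfl⟩⟩ := Nat.exists_dvd_mem_Icc hm h
  refine prod_eq_zero ht (geom_sum_eq_zero_of_pow_eq_one hq1 ?_)
  rw [mul_left_comm, pow_mul, hqm, one_pow]

theorem dBGF_eq_sum_Ico (hm : 0 < m) (hq1 : q ≠ 1) (hqm : q ^ m = 1) (n : ℕ) :
    dBGF n q = ∑ k ∈ Ico (n + 1 - m) (n + 1), (-1) ^ k * q ^ (k * (k - 1)) *
      ∏ t ∈ Icc (k + 1) n, ∑ i ∈ range (2 * t), q ^ i := by
  refine (sum_subset (fun k hk ↦ mem_range.mpr (mem_Ico.mp hk).2) fun k hk hk' ↦ ?_).symm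
  rw [prod_Icc_geom_sum_eq_zero hm hq1 hqm, mul_zero]
  simp only [mem_range, mem_Ico, not_and, not_lt] at hk hk'
  omega

theorem norm_dBGF_le (hm : 0 < m) (hq1 : q ≠ 1) (hqm : q ^ m = 1) (n : ℕ) :
    ‖dBGF n q‖ ≤ m * (2 / ‖q - 1‖) ^ m := by
  have hq : ‖q‖ = 1 := norm_eq_one_of_pow_eq_one hqm hm.ne'
  have hB := one_le_two_div_norm_sub_one hq.le hq1
  have hterm : ∀ k ∈ Ico (n + 1 - m) (n + 1), ‖(-1) ^ k * q ^ (k * (k - 1)) *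
      ∏ t ∈ Icc (k + 1) n, ∑ i ∈ range (2 * t), q ^ i‖ ≤ (2 / ‖q - 1‖) ^ m := by
    intro k hk
    simp only [norm_mul, norm_pow, norm_neg, norm_one, hq, one_pow, one_mul]
    refine (norm_prod_geom_sum_le_of_norm_le_one hq.le hq1 _ _).trans (pow_le_pow_right₀ hB ?_)
    rw [Nat.card_Icc]
    have := mem_Ico.mp hk
    omega
  calc ‖dBGF n q‖
      ≤ ∑ k ∈ Ico (n + 1 - m) (n + 1), ‖(-1) ^ k * q ^ (k * (k - 1)) *
          ∏ t ∈ Icc (k + 1) n, ∑ i ∈ range (2 * t), q ^ i‖ := by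
        rw [dBGF_eq_sum_Ico hm hq1 hqm]
        exact norm_sum_le _ _
    _ ≤ #(Ico (n + 1 - m) (n + 1)) • (2 / ‖q - 1‖) ^ m := sum_le_card_nsmul _ _ _ hterm
    _ ≤ m * (2 / ‖q - 1‖) ^ m := by
        rw [nsmul_eq_mul, Nat.card_Ico]
        gcongr
        exact_mod_cast (by omega : n + 1 - (n + 1 - m) ≤ m)

end RootOfUnity

theorem stmt_12_general (m : ℕ)
    (ω : ℂ) (hω : ω = Complex.exp (2 * Real.pi * Complex.I / m)) :
    ∃ C : ℝ, ∀ j, 1 ≤ j → j ≤ m - 1 → ∀ n : ℕ,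
      ‖dBGF n (ω ^ j)‖ ≤ C := by
  obtain ⟨C, hC⟩ := ((Icc 1 (m - 1)).image fun j ↦ m * (2 / ‖ω ^ j - 1‖) ^ m).bddAbove
  refine ⟨C, fun j hj1 hjm n ↦ ?_⟩
  have hprim : IsPrimitiveRoot ω m := hω ▸ isPrimitiveRoot_exp m (by omega)
  have hqm : (ω ^ j) ^ m = 1 := by rw [pow_right_comm, hprim.pow_eq_one, one_pow]
  have hq1 : ω ^ j ≠ 1 := hprim.pow_ne_one_of_pos_of_lt (by omega) (by omega)
  exact (norm_dBGF_le (by omega) hq1 hqm n).trans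
    (hC (mem_image_of_mem _ (mem_Icc.mpr ⟨hj1, hjm⟩)))

theorem stmt_12 (m : ℕ) (hm : 2 ≤ m)
    (ω : ℂ) (hω : ω = Complex.exp (2 * Real.pi * Complex.I / m)) :
    ∃ C : ℝ, ∀ j, 1 ≤ j → j ≤ m - 1 → ∀ n : ℕ,
      ‖dBGF n (ω ^ j)‖ ≤ C :=
  stmt_12_general m ω hω
end

section
/- The q-Catalan number satisfies C_n(q) = (1/[n+1]_q) · [2n]_q!/([n]_q!)² = ∏_{t=2}^n [t+n]_q/[t]_q as rational functions (and C_n(q) is a polynomial). -/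
open Finset Polynomial

/-- The `q`-integer `[t]_q = 1 + q + ⋯ + q^{t-1}` as a polynomial. -/
noncomputable def qInt (t : ℕ) : Polynomial ℚ :=
  ∑ i ∈ Finset.range t, Polynomial.X ^ i

/-- The `q`-factorial `[n]_q! = ∏_{t=1}^n [t]_q`. -/
noncomputable def qFact (n : ℕ) : Polynomial ℚ :=
  ∏ t ∈ Finset.Icc 1 n, qInt t

/-- The images in the field of rational functions. -/
noncomputable def toRF (p : Polynomial ℚ) : RatFunc ℚ :=
  algebraMap (Polynomial ℚ) (RatFunc ℚ) p

/-!
The product formula is bookkeeping: `[2n]_q! = [n]_q! · ∏_{t=1}^n [t+n]_q`, and the factor `t = 1`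
of `∏_{t=1}^n [t+n]_q/[t]_q` is `[n+1]_q`.

For polynomiality, the Gaussian binomials are polynomials by the `q`-Pascal recurrence, and
`C_n(q) = [2n choose n]_q - q [2n choose n+1]_q`: indeed `[n+1]_q [2n choose n+1]_q = [n]_q [2n choose n]_q`
and `[n+1]_q - q [n]_q = 1`.
-/

lemma qInt_one : qInt 1 = 1 := by simp [qInt]

lemma qInt_add (a b : ℕ) : qInt (a + b) = qInt a + X ^ a * qInt b := by
  simp only [qInt, sum_range_add, mul_sum, pow_add]

lemma qInt_succ (n : ℕ) : qInt (n + 1) = 1 + X * qInt n := by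
  rw [add_comm, qInt_add, qInt_one, pow_one]

lemma qInt_ne_zero {t : ℕ} (ht : t ≠ 0) : qInt t ≠ 0 := by
  intro h
  have h1 : (qInt t).eval 1 = t := by simp [qInt]
  rw [h, eval_zero] at h1
  exact ht (by exact_mod_cast h1.symm)

lemma qFact_zero : qFact 0 = 1 := rfl

lemma qFact_succ (n : ℕ) : qFact (n + 1) = qFact n * qInt (n + 1) :=
  prod_Icc_succ_top (by omega) _

lemma qFact_ne_zero (n : ℕ) : qFact n ≠ 0 :=
  prod_ne_zero_iff.2 fun _ ht => qInt_ne_zero (by simp at ht; omega)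

lemma qFact_add (m n : ℕ) : qFact (m + n) = qFact n * ∏ t ∈ Icc 1 m, qInt (t + n) := by
  induction m with
  | zero => simp
  | succ m ih =>
    rw [Nat.add_right_comm, qFact_succ, ih, prod_Icc_succ_top (by omega), mul_assoc,
      Nat.add_right_comm m 1 n]

lemma qFact_eq_prod_Icc_two (n : ℕ) : qFact n = ∏ t ∈ Icc 2 n, qInt t := by
  obtain rfl | hn := n.eq_zero_or_pos
  · rfl
  rw [qFact, Icc_eq_cons_Ioc hn, prod_cons, qInt_one, one_mul, ← Icc_add_one_left_eq_Ioc]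
  rfl

lemma toRF_ne_zero {p : ℚ[X]} (hp : p ≠ 0) : toRF p ≠ 0 :=
  (map_ne_zero_iff _ (IsFractionRing.injective ℚ[X] (RatFunc ℚ))).2 hp

theorem toRF_qFact_two_mul_div (n : ℕ) :
    toRF (qFact (2 * n)) / (toRF (qInt (n + 1)) * (toRF (qFact n)) ^ 2)
      = ∏ t ∈ Icc 2 n, toRF (qInt (t + n)) / toRF (qInt t) := by
  obtain rfl | hn := n.eq_zero_or_pos
  · simp [qFact_zero, qInt_one, toRF]
  have hnum : qFact (2 * n) = qFact n * (qInt (n + 1) * ∏ t ∈ Icc 2 n, qInt (t + n)) := by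
    rw [two_mul, qFact_add, Icc_eq_cons_Ioc hn, prod_cons, ← Icc_add_one_left_eq_Ioc, add_comm 1]
    rfl
  have hden : ∏ t ∈ Icc 2 n, toRF (qInt t) ≠ 0 :=
    prod_ne_zero_iff.2 fun _ ht => toRF_ne_zero (qInt_ne_zero (by simp at ht; omega))
  rw [prod_div_distrib, div_eq_div_iff (mul_ne_zero (toRF_ne_zero (qInt_ne_zero n.add_one_ne_zero))
    (pow_ne_zero 2 (toRF_ne_zero (qFact_ne_zero n)))) hden]
  simp only [toRF, ← map_prod, ← map_mul, ← map_pow]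
  congr 1
  rw [hnum, ← qFact_eq_prod_Icc_two]
  ring

/-- `qBinom k l` is the Gaussian binomial `[k + l choose k]_q`, given by the `q`-Pascal recurrence. -/
noncomputable def qBinom : ℕ → ℕ → ℚ[X]
  | 0, _ => 1
  | _, 0 => 1
  | k + 1, l + 1 => qBinom k (l + 1) + X ^ (k + 1) * qBinom (k + 1) l

theorem qBinom_mul_qFact_mul_qFact : ∀ k l : ℕ, qBinom k l * qFact k * qFact l = qFact (k + l)
  | 0, l => by simp [qBinom, qFact_zero]
  | k + 1, 0 => by simp [qBinom, qFact_zero]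
  | k + 1, l + 1 => by
    have h₁ := qBinom_mul_qFact_mul_qFact k (l + 1)
    have h₂ := qBinom_mul_qFact_mul_qFact (k + 1) l
    calc qBinom (k + 1) (l + 1) * qFact (k + 1) * qFact (l + 1)
        = qBinom k (l + 1) * qFact k * qFact (l + 1) * qInt (k + 1)
          + X ^ (k + 1) * (qBinom (k + 1) l * qFact (k + 1) * qFact l) * qInt (l + 1) := by
          rw [qBinom, qFact_succ k, qFact_succ l]; ring
      _ = qFact (k + l + 1) * (qInt (k + 1) + X ^ (k + 1) * qInt (l + 1)) := by
          rw [h₁, h₂, ← add_assoc, Nat.add_right_comm k 1 l]; ring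
      _ = qFact (k + 1 + (l + 1)) := by
          rw [← qInt_add, show k + 1 + (l + 1) = k + l + 1 + 1 by omega, ← qFact_succ]

theorem qBinom_succ_left_mul_qInt (k l : ℕ) :
    qBinom (k + 1) l * qInt (k + 1) = qBinom k (l + 1) * qInt (l + 1) := by
  refine mul_right_cancel₀ (mul_ne_zero (qFact_ne_zero k) (qFact_ne_zero l)) ?_
  calc qBinom (k + 1) l * qInt (k + 1) * (qFact k * qFact l)
      = qBinom (k + 1) l * qFact (k + 1) * qFact l := by rw [qFact_succ]; ring
    _ = qBinom k (l + 1) * qFact k * qFact (l + 1) := by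
      rw [qBinom_mul_qFact_mul_qFact, qBinom_mul_qFact_mul_qFact, Nat.add_right_comm, add_assoc]
    _ = qBinom k (l + 1) * qInt (l + 1) * (qFact k * qFact l) := by rw [qFact_succ]; ring

noncomputable def qCatalan : ℕ → ℚ[X]
  | 0 => 1
  | n + 1 => qBinom (n + 1) (n + 1) - X * qBinom (n + 2) n

theorem qCatalan_mul_qInt (n : ℕ) : qCatalan n * qInt (n + 1) = qBinom n n := by
  cases n with
  | zero => simp [qCatalan, qBinom, qInt_one]
  | succ n =>
    have h := qBinom_succ_left_mul_qInt (n + 1) n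
    rw [qCatalan, sub_mul, mul_assoc, h, qInt_succ (n + 1)]
    ring

theorem qCatalan_mul (n : ℕ) : qCatalan n * (qInt (n + 1) * qFact n ^ 2) = qFact (2 * n) := by
  rw [two_mul, ← qBinom_mul_qFact_mul_qFact, ← qCatalan_mul_qInt]
  ring

theorem stmt_13 (n : ℕ) :
    (toRF (qFact (2 * n)) / (toRF (qInt (n + 1)) * (toRF (qFact n)) ^ 2)
        = ∏ t ∈ Finset.Icc 2 n, toRF (qInt (t + n)) / toRF (qInt t))
    ∧ ∃ C : Polynomial ℚ,
        toRF C = toRF (qFact (2 * n)) / (toRF (qInt (n + 1)) * (toRF (qFact n)) ^ 2) := by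
  refine ⟨toRF_qFact_two_mul_div n, qCatalan n, ?_⟩
  rw [eq_div_iff (mul_ne_zero (toRF_ne_zero (qInt_ne_zero n.add_one_ne_zero))
    (pow_ne_zero 2 (toRF_ne_zero (qFact_ne_zero n)))), ← qCatalan_mul]
  simp only [toRF, map_mul, map_pow]
end
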